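/- Let G be a finite group generated by two elements g_r and g_u, let c = g_r g_u g_r⁻¹ g_u⁻¹, let H be a subgroup of G containing no nontrivial normal subgroup of G, and let N be the normalizer of H in G. Assume that every conjugate g c g⁻¹ (g ∈ G) lies in N. Then for every irreducible complex representation ρ_α of N/H, the codimension ℓ_α of the fixed subspace of ψ_α(c), where ψ_α is the representation of G induced from the inflation of ρ_α to N, is never equal to 1. -/

import Mathlib

open Module

/-- A representation is irreducible if the space is nonzero and the only invariant
subspaces are `⊥` and `⊤`. -/
def IsIrreducibleRep {k : Type*} [CommRing k] {Γ : Type*} [Group Γ] {V : Type*}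
    [AddCommGroup V] [Module k V] (ρ : Representation k Γ V) : Prop :=
  Nontrivial V ∧ ∀ U : Submodule k V, (∀ γ : Γ, ∀ v ∈ U, ρ γ v ∈ U) → U = ⊥ ∨ U = ⊤

section Induced

variable {k : Type*} [CommRing k] {G : Type*} [Group G] (N : Subgroup G)
  {V : Type*} [AddCommGroup V] [Module k V]

/-- The space of the representation of `G` induced from a representation `σ` of a
subgroup `N`: functions `f : G → V` with `f (n * g) = σ n (f g)`. -/
def indCarrier (σ : Representation k N V) : Submodule k (G → V) where
  carrier := {f | ∀ (n : N) (g : G), f (↑n * g) = σ n (f g)}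
  add_mem' := by
    intro f h hf hh n g
    simp only [Pi.add_apply, hf n g, hh n g, map_add]
  zero_mem' := by
    intro n g
    simp
  smul_mem' := by
    intro a f hf n g
    simp only [Pi.smul_apply, hf n g, map_smul]

/-- The representation of `G` induced from a representation `σ` of the subgroup `N`,
acting by right translation on `indCarrier N σ`. -/
def indRep (σ : Representation k N V) : Representation k G ↥(indCarrier N σ) where
  toFun x :=
    { toFun := fun f => ⟨fun g => (f : G → V) (g * x), fun n g => by
        simpa [mul_assoc] using f.2 n (g * x)⟩
      map_add' := fun f h => rfl
      map_smul' := fun a f => rfl }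
  map_one' := LinearMap.ext fun f => Subtype.ext (funext fun g => by simp)
  map_mul' := fun x y => LinearMap.ext fun f => Subtype.ext (funext fun g => by
    simp [mul_assoc])

end Induced

/-!
`c` is a commutator, so `det (ψ c) = 1`, and `ψ c` has finite order. If the fixed space of
an operator `A` has codimension one, then `A - 1` has rank one, `A = 1 + w ⊗ φ` and
`det A = 1 + φ w`. So `det A = 1` forces `φ w = 0`, i.e. `(A - 1) ^ 2 = 0`, and then
`A ^ n = 1 + n (A - 1)` cannot be `1` in characteristic zero: `A` would be a transvection.
-/

open LinearMap
open scoped commutatorElement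

theorem MonoidHom.map_commutatorElement_eq_one {G M : Type*} [Group G] [CommMonoid M]
    (f : G →* M) (g₁ g₂ : G) : f ⁅g₁, g₂⁆ = 1 := by
  rw [← MonoidHom.coe_toHomUnits, map_commutatorElement, (Commute.all _ _).commutator_eq,
    Units.val_one]

theorem one_add_pow_of_mul_self_eq_zero {R : Type*} [Semiring R] {b : R} (hb : b * b = 0)
    (n : ℕ) : (1 + b) ^ n = 1 + n • b := by
  induction n with
  | zero => simp
  | succ n ih =>
    rw [pow_succ, ih]
    simp only [add_mul, mul_add, one_mul, mul_one, smul_mul_assoc, hb, smul_zero, add_zero,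
      succ_nsmul]
    abel

namespace LinearMap

section CommRing

variable {R M : Type*} [CommRing R] [AddCommGroup M] [Module R M]

theorem smulRight_mul_smulRight (φ : M →ₗ[R] R) (w : M) :
    φ.smulRight w * φ.smulRight w = φ w • φ.smulRight w := by
  ext v
  simp [smul_smul, mul_comm]

theorem det_one_add_smulRight [Module.Free R M] [Module.Finite R M] (φ : M →ₗ[R] R) (w : M) :
    LinearMap.det (1 + φ.smulRight w) = 1 + φ w := by
  classical
  let b := Module.Free.chooseBasis R M
  have hmat : toMatrix b b (1 + φ.smulRight w) =
      1 + Matrix.replicateCol Unit (b.repr w) * Matrix.replicateRow Unit (fun j => φ (b j)) := by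
    ext i j
    simp [toMatrix_apply, Matrix.one_apply, Matrix.mul_apply, Finsupp.single_apply, eq_comm,
      mul_comm]
  rw [← det_toMatrix b, hmat, Matrix.det_one_add_replicateCol_mul_replicateRow]
  conv_rhs => rw [← b.sum_repr w]
  simp only [dotProduct, map_sum, map_smul, smul_eq_mul, mul_comm]

end CommRing

variable {K V W : Type*} [Field K] [AddCommGroup V] [Module K V] [AddCommGroup W] [Module K W]

theorem exists_eq_smulRight_of_finrank_range_eq_one {B : V →ₗ[K] W}
    (hB : finrank K (range B) = 1) : ∃ (φ : V →ₗ[K] K) (w : W), B = φ.smulRight w := by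
  have := Module.finite_of_finrank_eq_succ hB
  let b := finBasisOfFinrankEq K _ hB
  refine ⟨(b.coord 0).comp B.rangeRestrict, b 0, ext fun v => ?_⟩
  have hv := b.sum_repr (B.rangeRestrict v)
  rw [Fin.sum_univ_one] at hv
  simpa using congrArg Subtype.val hv.symm

theorem finrank_sub_finrank_ker_sub_one_ne_one [CharZero K] [FiniteDimensional K V]
    {A : V →ₗ[K] V} {n : ℕ} (hn : n ≠ 0) (hA : A ^ n = 1) (hdet : LinearMap.det A = 1) :
    finrank K V - finrank K (ker (A - 1)) ≠ 1 := by
  intro h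
  have hrank : finrank K (range (A - 1)) = 1 := by
    have := finrank_range_add_finrank_ker (A - 1)
    omega
  obtain ⟨φ, w, hφw⟩ := exists_eq_smulRight_of_finrank_range_eq_one hrank
  have hA_eq : A = 1 + φ.smulRight w := by rw [← hφw, add_sub_cancel]
  have hφ : φ w = 0 := by
    simpa [hA_eq, det_one_add_smulRight] using hdet
  have hsq : (A - 1) * (A - 1) = 0 := by
    rw [hφw, smulRight_mul_smulRight, hφ, zero_smul]
  have hzero : A - 1 = 0 := by
    have hpow := one_add_pow_of_mul_self_eq_zero hsq n
    rw [add_sub_cancel, hA, left_eq_add, ← Nat.cast_smul_eq_nsmul K, smul_eq_zero] at hpow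
    exact hpow.resolve_left (Nat.cast_ne_zero.mpr hn)
  rw [hzero, ker_zero, finrank_top, Nat.sub_self] at h
  exact zero_ne_one h

end LinearMap

theorem multiplicity_ne_one_of_quasiregular_general
    {G : Type*} [Group G] [Fintype G]
    (g_r g_u : G)
    (c : G) (hc : c = g_r * g_u * g_r⁻¹ * g_u⁻¹)
    (H : Subgroup G)
    {V : Type*} [AddCommGroup V] [Module ℂ V] [FiniteDimensional ℂ V]
    (ρ : Representation ℂ (↥(Subgroup.normalizer (H : Set G)) ⧸ H.subgroupOf (Subgroup.normalizer (H : Set G))) V) :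
    finrank ℂ
        ↥(indCarrier (Subgroup.normalizer (H : Set G)) (ρ.comp (QuotientGroup.mk' (H.subgroupOf (Subgroup.normalizer (H : Set G))))))
      - finrank ℂ
        ↥(LinearMap.ker
          (indRep (Subgroup.normalizer (H : Set G)) (ρ.comp (QuotientGroup.mk' (H.subgroupOf (Subgroup.normalizer (H : Set G))))) c - 1))
      ≠ 1 := by
  set ψ := indRep (Subgroup.normalizer (H : Set G))
    (ρ.comp (QuotientGroup.mk' (H.subgroupOf (Subgroup.normalizer (H : Set G)))))
  refine finrank_sub_finrank_ker_sub_one_ne_one (n := Fintype.card G) Fintype.card_ne_zero ?_ ?_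
  · rw [← map_pow, pow_card_eq_one, map_one]
  · rw [hc, ← commutatorElement_def]
    exact (LinearMap.det.comp ψ).map_commutatorElement_eq_one g_r g_u

/-- **Quasiregular origamis: multiplicities are never 1** (Matheus–Yoccoz–Zmiaikou,
Proposition 3.14). Let `G` be a finite group generated by `g_r, g_u`, let
`c = g_r g_u g_r⁻¹ g_u⁻¹`, let `H` be a subgroup of `G` containing no nontrivial
normal subgroup of `G`, and let `N` be the normalizer of `H` in `G`. Assume every
conjugate `g c g⁻¹` lies in `N` (the origami is quasiregular). Then for every
irreducible complex representation `ρ` of `N/H`, the codimension of the fixed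
subspace of `ψ c`, where `ψ` is the representation of `G` induced from the inflation
of `ρ` to `N`, is never equal to `1`. -/
theorem multiplicity_ne_one_of_quasiregular
    {G : Type*} [Group G] [Fintype G]
    (g_r g_u : G) (hgen : Subgroup.closure ({g_r, g_u} : Set G) = ⊤)
    (c : G) (hc : c = g_r * g_u * g_r⁻¹ * g_u⁻¹)
    (H : Subgroup G)
    (hcorefree : ∀ K : Subgroup G, K ≤ H → K.Normal → K = ⊥)
    (hqr : ∀ g : G, g * c * g⁻¹ ∈ (Subgroup.normalizer (H : Set G)))
    {V : Type*} [AddCommGroup V] [Module ℂ V] [FiniteDimensional ℂ V]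
    (ρ : Representation ℂ (↥(Subgroup.normalizer (H : Set G)) ⧸ H.subgroupOf (Subgroup.normalizer (H : Set G))) V)
    (hρ : IsIrreducibleRep ρ) :
    finrank ℂ
        ↥(indCarrier (Subgroup.normalizer (H : Set G)) (ρ.comp (QuotientGroup.mk' (H.subgroupOf (Subgroup.normalizer (H : Set G))))))
      - finrank ℂ
        ↥(LinearMap.ker
          (indRep (Subgroup.normalizer (H : Set G)) (ρ.comp (QuotientGroup.mk' (H.subgroupOf (Subgroup.normalizer (H : Set G))))) c - 1))
      ≠ 1 :=
  multiplicity_ne_one_of_quasiregular_general g_r g_u c hc H ρ
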